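/- arXiv:2309.05827 — 8 statements merged into one kernel-verified Lean document; each statement's English description precedes it below -/
import Mathlib

section
/- Let n ≥ 1 and let a weighted matrix digraph on vertices {0,1,…,n} be given by a finite arc type E with source map s and target map t as above. Let S ⊆ E be a subset of arcs with |S| = n such that every vertex i ∈ {1,…,n} is the target of exactly one arc of S. Form the n×n integer matrix M_S with rows indexed by {1,…,n} and columns indexed by S via the bijection e ↦ t(e), whose (i,e) entry is [t(e)=i] − [s(e)=i] (i.e. the incidence matrix with row 0 struck). If S contains a directed cycle (a nonempty sequence of arcs e_1,…,e_r of S with t(e_k) = s(e_{k+1}) for k < r and t(e_r) = s(e_1)), then det(M_S) = 0. -/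
/-!
Each column of `M_S` is the incidence vector `[t e = ·] - [s e = ·]` of an arc, so summing the
columns along a directed cycle telescopes to zero. Hence the vector counting how often each arc
occurs on the cycle is a nonzero kernel vector of `M_S`.
-/

attribute [local instance] Classical.propDecidable

/-- A directed cycle within the arc set `S`: a nonempty list of arcs `e₁,…,e_r` of `S` with
`t eₖ = s eₖ₊₁` for `k < r` and `t e_r = s e₁`. -/
def HasCycleIn {V E : Type*} (s t : E → V) (S : Finset E) : Prop :=
  ∃ (l : List E) (hl : l ≠ []), (∀ e ∈ l, e ∈ S) ∧
    List.Chain' (fun e f => t e = s f) l ∧ t (l.getLast hl) = s (l.head hl)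

theorem Matrix.det_eq_zero_of_sum_map_eq_zero {n R : Type*} [Fintype n] [DecidableEq n]
    [CommRing R] [IsDomain R] [CharZero R] (M : Matrix n n R) {l : List n} (hl : l ≠ [])
    (h : ∀ i, (l.map (M i)).sum = 0) :
    M.det = 0 := by
  rw [← exists_mulVec_eq_zero_iff]
  refine ⟨fun j => (l.count j : R), fun hv => ?_, funext fun i => ?_⟩
  · have hcount := congr_fun hv (l.head hl)
    rw [Pi.zero_apply, Nat.cast_eq_zero] at hcount
    exact (List.count_pos_iff.mpr (List.head_mem hl)).ne' hcount
  · rw [Pi.zero_apply, ← h i, Finset.sum_list_map_count, mulVec, dotProduct,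
      ← Finset.sum_subset (Finset.subset_univ l.toFinset)]
    · simp only [nsmul_eq_mul, mul_comm]
    · intro j _ hj
      rw [List.count_eq_zero_of_not_mem (by simpa using hj), Nat.cast_zero, mul_zero]

theorem List.sum_map_sub_of_isChain {V E G : Type*} [AddCommGroup G] (s t : E → V) (f : V → G) :
    ∀ {l : List E} (hl : l ≠ []), l.IsChain (fun e e' => t e = s e') →
      (l.map fun e => f (t e) - f (s e)).sum = f (t (l.getLast hl)) - f (s (l.head hl))
  | [a], _, _ => by simp
  | a :: b :: l, _, h => by
    obtain ⟨hab, h⟩ := List.isChain_cons_cons.mp h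
    rw [List.map_cons, List.sum_cons, List.sum_map_sub_of_isChain s t f (List.cons_ne_nil b l) h,
      List.getLast_cons_cons, List.head_cons, List.head_cons, hab]
    abel

theorem HasCycleIn.exists_sum_map_sub_eq_zero {V E G : Type*} [AddCommGroup G] {s t : E → V}
    {S : Finset E} (h : HasCycleIn s t S) :
    ∃ l : List S, l ≠ [] ∧ ∀ f : V → G, (l.map fun e : S => f (t e) - f (s e)).sum = 0 := by
  obtain ⟨l, hl, hS, hchain, hclosed⟩ := h
  lift l to List S using hS
  refine ⟨l, by rintro rfl; exact hl rfl, fun f => ?_⟩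
  have := List.sum_map_sub_of_isChain s t f hl hchain
  rwa [hclosed, sub_self, List.map_map] at this

theorem det_incidence_submatrix_eq_zero_of_cycle_general
    (n : ℕ)
    (E : Type*)
    (s t : E → Fin (n + 1))
    (S : Finset E)
    (φ : {e // e ∈ S} ≃ Fin n)
    (MS : Matrix (Fin n) (Fin n) ℤ)
    (hMS : ∀ i j, MS i j =
      (if t (φ.symm j).1 = i.succ then 1 else 0) - (if s (φ.symm j).1 = i.succ then 1 else 0))
    (hcyc : HasCycleIn s t S) :
    MS.det = 0 := by
  obtain ⟨l, hl, hsum⟩ := hcyc.exists_sum_map_sub_eq_zero (G := ℤ)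
  refine MS.det_eq_zero_of_sum_map_eq_zero (l := l.map φ) (by simpa using hl) fun i => ?_
  simpa [Function.comp_def, hMS] using hsum fun v => if v = i.succ then 1 else 0

/-- If the `n`-arc subset `S` (with every vertex `1,…,n` the target of exactly
one arc of `S`) contains a directed cycle, then the incidence submatrix `M_S` (rows indexed by
vertices `1,…,n`, columns indexed by `S` via `e ↦ t e`) has determinant `0`. -/
theorem det_incidence_submatrix_eq_zero_of_cycle
    (n : ℕ) (hn : 1 ≤ n)
    (E : Type*) [Fintype E] [DecidableEq E]
    (s t : E → Fin (n + 1))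
    (ht : ∀ e, t e ≠ 0) (hs : ∀ e, s e ≠ t e)
    (S : Finset E) (hcard : S.card = n)
    (hone : ∀ i : Fin (n + 1), i ≠ 0 → ∃! e, e ∈ S ∧ t e = i)
    (φ : {e // e ∈ S} ≃ Fin n)
    (hφ : ∀ e : {e // e ∈ S}, t e.1 = (φ e).succ)
    (MS : Matrix (Fin n) (Fin n) ℤ)
    (hMS : ∀ i j, MS i j =
      (if t (φ.symm j).1 = i.succ then 1 else 0) - (if s (φ.symm j).1 = i.succ then 1 else 0))
    (hcyc : HasCycleIn s t S) :
    MS.det = 0 :=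
  det_incidence_submatrix_eq_zero_of_cycle_general n E s t S φ MS hMS hcyc
end

section
/- Let n ≥ 1 and let a weighted matrix digraph on vertices {0,1,…,n} be given by a finite arc type E with source map s and target map t as above. Let S ⊆ E be a subset of arcs with |S| = n such that every vertex i ∈ {1,…,n} is the target of exactly one arc of S. Form the n×n integer matrix M_S with rows indexed by {1,…,n} and columns indexed by S via the bijection e ↦ t(e), whose (i,e) entry is [t(e)=i] − [s(e)=i] (i.e. the incidence matrix with row 0 struck). If S contains no directed cycle, then det(M_S) = 1. -/
/-!
Column `j` of `M_S` has the entry `1` on the diagonal and at most one other nonzero entry, `-1` in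
the row of the source of the arc entering `j`. Without directed cycles this "parent" relation is
well-founded, so ordering `{1,…,n}` by rank in it makes `M_S` upper triangular with unit diagonal.
-/

attribute [local instance] Classical.propDecidable

theorem Matrix.det_eq_prod_diag_of_lt {m R α : Type*} [Fintype m] [DecidableEq m] [CommRing R]
    [LinearOrder α] {M : Matrix m m R} (b : m → α)
    (hM : ∀ i j, i ≠ j → M i j ≠ 0 → b i < b j) : M.det = ∏ i, M i i := by
  have hT : M.BlockTriangular b := fun i j hji => by
    by_contra hne
    exact (hM i j (by rintro rfl; exact hji.false) hne).asymm hji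
  have hblock (k : α) :
      M.toSquareBlock b k = Matrix.diagonal fun i : {i // b i = k} => M i i := by
    ext ⟨i, hi⟩ ⟨j, hj⟩
    by_cases hij : i = j
    · subst hij; simp [Matrix.toSquareBlock_def]
    · simp only [Matrix.toSquareBlock_def, Matrix.diagonal_apply, Subtype.mk.injEq, hij,
        if_false]
      by_contra hne
      exact (hM i j hij hne).ne (hi.trans hj.symm)
  rw [hT.det]
  refine Finset.prod_image' _ fun i _ => ?_
  rw [hblock, Matrix.det_diagonal]
  exact (Finset.prod_subtype _ (by simp) fun j => M j j).symm

theorem Finite.wellFounded_of_irrefl_transGen {α : Type*} [Finite α] {r : α → α → Prop}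
    (h : ∀ a, ¬Relation.TransGen r a a) : WellFounded r :=
  have : Std.Irrefl (Relation.TransGen r) := ⟨h⟩
  Subrelation.wf Relation.TransGen.single (Finite.wellFounded_of_trans_of_irrefl _)

section

variable {V E ι : Type*} {s t : E → V} {S : Finset E} {a : ι → E}

theorem hasCycleIn_of_transGen (ha : ∀ i, a i ∈ S) {i : ι}
    (h : Relation.TransGen (fun i j => t (a i) = s (a j)) i i) : HasCycleIn s t S := by
  obtain ⟨d, hid, hdi⟩ := Relation.TransGen.tail'_iff.1 h
  obtain ⟨l, hchain, hlast⟩ := List.exists_isChain_cons_of_relationReflTransGen hid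
  refine ⟨(i :: l).map a, by simp, by simp [ha], (List.isChain_map a).2 hchain, ?_⟩
  rw [List.getLast_map, List.head_map, hlast]
  exact hdi

theorem wellFounded_of_not_hasCycleIn [Finite ι] (ha : ∀ i, a i ∈ S) (h : ¬HasCycleIn s t S) :
    WellFounded fun i j => t (a i) = s (a j) :=
  Finite.wellFounded_of_irrefl_transGen fun _ hi => h (hasCycleIn_of_transGen ha hi)

end

theorem det_incidence_submatrix_eq_one_of_acyclic_general
    (n : ℕ)
    (E : Type*)
    (s t : E → Fin (n + 1))
    (hs : ∀ e, s e ≠ t e)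
    (S : Finset E)
    (φ : {e // e ∈ S} ≃ Fin n)
    (hφ : ∀ e : {e // e ∈ S}, t e.1 = (φ e).succ)
    (MS : Matrix (Fin n) (Fin n) ℤ)
    (hMS : ∀ i j, MS i j =
      (if t (φ.symm j).1 = i.succ then 1 else 0) - (if s (φ.symm j).1 = i.succ then 1 else 0))
    (hacyc : ¬ HasCycleIn s t S) :
    MS.det = 1 := by
  have hta (j : Fin n) : t (φ.symm j).1 = j.succ := by simpa using hφ (φ.symm j)
  have hdiag (j : Fin n) : MS j j = 1 := by
    rw [hMS, if_pos (hta j), if_neg (hta j ▸ hs _), sub_zero]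
  have hoff (i j : Fin n) (hij : i ≠ j) (hne : MS i j ≠ 0) :
      t (φ.symm i).1 = s (φ.symm j).1 := by
    rw [hMS, hta, if_neg (fun h => hij (Fin.succ_injective _ h).symm)] at hne
    have hsrc : s (φ.symm j).1 = i.succ := by
      by_contra h
      exact hne (by rw [if_neg h, sub_zero])
    rw [hta, hsrc]
  have : IsWellFounded (Fin n) fun i j => t (φ.symm i).1 = s (φ.symm j).1 :=
    ⟨wellFounded_of_not_hasCycleIn (fun j => (φ.symm j).2) hacyc⟩
  rw [Matrix.det_eq_prod_diag_of_lt
    (IsWellFounded.rank fun i j => t (φ.symm i).1 = s (φ.symm j).1)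
    fun i j hij hne => IsWellFounded.rank_lt_of_rel (hoff i j hij hne)]
  simp [hdiag]

/-- If the `n`-arc subset `S` (with every vertex `1,…,n` the target of exactly
one arc of `S`) contains no directed cycle, then the incidence submatrix `M_S` (rows indexed by
vertices `1,…,n`, columns indexed by `S` via `e ↦ t e`) has determinant `1`. -/
theorem det_incidence_submatrix_eq_one_of_acyclic
    (n : ℕ) (hn : 1 ≤ n)
    (E : Type*) [Fintype E] [DecidableEq E]
    (s t : E → Fin (n + 1))
    (ht : ∀ e, t e ≠ 0) (hs : ∀ e, s e ≠ t e)
    (S : Finset E) (hcard : S.card = n)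
    (hone : ∀ i : Fin (n + 1), i ≠ 0 → ∃! e, e ∈ S ∧ t e = i)
    (φ : {e // e ∈ S} ≃ Fin n)
    (hφ : ∀ e : {e // e ∈ S}, t e.1 = (φ e).succ)
    (MS : Matrix (Fin n) (Fin n) ℤ)
    (hMS : ∀ i j, MS i j =
      (if t (φ.symm j).1 = i.succ then 1 else 0) - (if s (φ.symm j).1 = i.succ then 1 else 0))
    (hacyc : ¬ HasCycleIn s t S) :
    MS.det = 1 :=
  det_incidence_submatrix_eq_one_of_acyclic_general n E s t hs S φ hφ MS hMS hacyc
end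

section
/- Let n ≥ 1, let R be a commutative ring, and let a weighted matrix digraph on vertices {0,1,…,n} be given by a finite arc type E with source map s, target map t and weight map w as above. Let A be the n×n matrix over R indexed by {1,…,n} with A_{ii} = Σ_{e : t(e)=i} w(e) and A_{ij} = −Σ_{e : s(e)=i, t(e)=j} w(e) for i ≠ j. Then det(A) = Σ_S ∏_{e∈S} w(e), where the sum runs over all arborescences S of the digraph, i.e. over all subsets S ⊆ E of cardinality n such that every vertex i ∈ {1,…,n} is the target of exactly one arc of S and S contains no directed cycle. -/
attribute [local instance] Classical.propDecidable

/-- An arborescence of the matrix digraph on vertices `{0,…,n}`: a set `S` of `n` arcs such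
that every vertex `i ∈ {1,…,n}` is the target of exactly one arc of `S` and `S` contains no
directed cycle. -/
def IsArbor {E : Type*} (n : ℕ) (s t : E → Fin (n + 1)) (S : Finset E) : Prop :=
  S.card = n ∧ (∀ i : Fin (n + 1), i ≠ 0 → ∃! e, e ∈ S ∧ t e = i) ∧ ¬ HasCycleIn s t S

/-!
Column `j` of `A` is `∑ w e • (𝟙_{t e} - 𝟙_{s e})` over the arcs `e` into `j`, with the root
coordinate deleted, so by multilinearity `det A = ∑_r (∏_j w (r j)) det M_r` over all choices `r`
of one in-arc per non-root vertex. `M_r` only depends on the parent map `q` sending `t (r j)` to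
`s (r j)`. If every vertex reaches the root under `q`, ordering the vertices by depth makes `M_r`
unitriangular, so `det M_r = 1`; otherwise the indicator of the vertices that never reach the root
is a kernel vector, so `det M_r = 0`. The image of `r` is an arborescence exactly when every vertex
reaches the root: the heads of the arcs of a directed cycle form a `q`-invariant set avoiding the
root, and conversely a periodic orbit of `q` away from the root traces a directed cycle. Finally
`r ↦ image r` is a bijection onto the arborescences.
-/

open Finset Matrix Function

namespace MatrixTree

section Dynamics

variable {α : Type*}

theorem exists_iterate_mem_periodicPts [Finite α] (f : α → α) (x : α) :
    ∃ a, f^[a] x ∈ periodicPts f := by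
  obtain ⟨a, b, hne, heq⟩ := Finite.exists_ne_map_eq_of_infinite (f^[·] x)
  wlog hab : a < b generalizing a b
  · exact this b a hne.symm heq.symm (by omega)
  refine ⟨a, mk_mem_periodicPts (Nat.sub_pos_of_lt hab) ?_⟩
  rw [IsPeriodicPt, IsFixedPt, ← iterate_add_apply, Nat.sub_add_cancel hab.le]
  exact heq.symm

theorem exists_iterate_apply_eq_iff {f : α → α} {v o : α} (hv : v ≠ o) :
    (∃ k, f^[k] (f v) = o) ↔ ∃ k, f^[k] v = o := by
  refine ⟨fun ⟨k, hk⟩ => ⟨k + 1, hk⟩, fun ⟨k, hk⟩ => ?_⟩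
  cases k with
  | zero => exact absurd hk hv
  | succ k => exact ⟨k, hk⟩

theorem find_iterate_lt_of_apply_eq [DecidableEq α] {f : α → α} {o : α}
    (hf : ∀ v, ∃ k, f^[k] v = o) {v w : α} (hv : v ≠ o) (hw : f v = w) :
    Nat.find (hf w) < Nat.find (hf v) := by
  subst hw
  obtain ⟨k, hk⟩ : ∃ k, Nat.find (hf v) = k + 1 :=
    Nat.exists_eq_succ_of_ne_zero fun h => hv <| by
      have := Nat.find_spec (hf v)
      rwa [h, iterate_zero_apply] at this
  have hfk : f^[k] (f v) = o := by
    have := Nat.find_spec (hf v)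
    rwa [hk, iterate_succ_apply] at this
  exact hk ▸ Nat.lt_succ_of_le (Nat.find_le hfk)

end Dynamics

theorem exists_mem_rel_of_cyclic {α : Type*} {r : α → α → Prop} {l : List α} (hl : l ≠ [])
    (hc : l.IsChain r) (hw : r (l.getLast hl) (l.head hl)) {b : α} (hb : b ∈ l) :
    ∃ a ∈ l, r a b := by
  obtain ⟨i, hi, rfl⟩ := List.getElem_of_mem hb
  cases i with
  | zero => exact ⟨l.getLast hl, List.getLast_mem hl, by simpa [List.head_eq_getElem] using hw⟩
  | succ i => exact ⟨l[i], List.getElem_mem _, List.isChain_iff_getElem.1 hc i hi⟩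

theorem hasCycleIn_of_reverse_closed_walk {V E : Type*} {s t : E → V} {S : Finset E}
    (a : ℕ → E) {m : ℕ} (hm : 0 < m) (haS : ∀ k, a k ∈ S) (hst : ∀ k, t (a (k + 1)) = s (a k))
    (hclose : t (a 0) = s (a (m - 1))) : HasCycleIn s t S := by
  have hl : (List.ofFn fun i : Fin m => a i).reverse ≠ [] := by simpa using hm.ne'
  refine ⟨_, hl, by simp [haS], ?_, ?_⟩
  · change List.IsChain _ _
    rw [List.isChain_reverse, List.isChain_ofFn]
    exact fun i _ => hst i
  · rw [List.getLast_reverse, List.head_reverse, List.head_ofFn, List.getLast_ofFn]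
    exact hclose

section Determinant

variable {R : Type*} [CommRing R] {n : ℕ}

theorem det_of_sum_smul_rows {m ι : Type*} [Fintype m] [DecidableEq m] (F : m → Finset ι)
    (w : ι → R) (v : ι → m → R) :
    (of fun i => ∑ e ∈ F i, w e • v e).det =
      ∑ r ∈ Fintype.piFinset F, (∏ i, w (r i)) * (of fun i => v (r i)).det := by
  change detRowAlternating.toMultilinearMap (fun i => ∑ e ∈ F i, w e • v e) = _
  rw [MultilinearMap.map_sum_finset]
  exact sum_congr rfl fun r _ =>
    detRowAlternating.toMultilinearMap.map_smul_univ (fun i => w (r i)) fun i => v (r i)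

def reducedIncidence (a b : Fin (n + 1)) : Fin n → R :=
  fun y => (Pi.single b 1 - Pi.single a 1 : Fin (n + 1) → R) y.succ

theorem reducedIncidence_dotProduct (a b : Fin (n + 1)) {f : Fin (n + 1) → R} (hf : f 0 = 0) :
    reducedIncidence a b ⬝ᵥ (f ∘ Fin.succ) = f b - f a := by
  have hsingle : ∀ c, ∑ y : Fin n, (Pi.single c 1 : Fin (n + 1) → R) y.succ * f y.succ = f c := by
    intro c
    have := Fin.sum_univ_succ fun v => (Pi.single c 1 : Fin (n + 1) → R) v * f v
    simpa [hf, Pi.single_apply] using this.symm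
  simp only [dotProduct, reducedIncidence, Pi.sub_apply, sub_mul, sum_sub_distrib,
    Function.comp_apply, hsingle]

def parentMatrix (q : Fin (n + 1) → Fin (n + 1)) : Matrix (Fin n) (Fin n) R :=
  of fun x => reducedIncidence (q x.succ) x.succ

theorem det_parentMatrix_of_forall_reaches {q : Fin (n + 1) → Fin (n + 1)}
    (hq : ∀ v, ∃ k, q^[k] v = 0) : (parentMatrix q : Matrix (Fin n) (Fin n) R).det = 1 := by
  let depth : Fin n → ℕ := fun x => Nat.find (hq x.succ)
  have hone : ∀ i j, depth j ≤ depth i →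
      (parentMatrix q)ᵀ i j = (1 : Matrix (Fin n) (Fin n) R) i j := by
    intro i j hij
    have hpar : q j.succ ≠ i.succ := fun h =>
      (show depth i < depth j from find_iterate_lt_of_apply_eq hq j.succ_ne_zero h).not_ge hij
    simp [parentMatrix, reducedIncidence, Pi.single_apply, one_apply, hpar.symm]
  have htri : (parentMatrix q)ᵀ.BlockTriangular depth := fun i j hji => by
    rw [hone i j hji.le, one_apply_ne (by rintro rfl; exact hji.false)]
  rw [← det_transpose, htri.det]
  refine prod_eq_one fun k _ => ?_
  have : ((parentMatrix q)ᵀ : Matrix (Fin n) (Fin n) R).toSquareBlock depth k = 1 := by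
    ext ⟨i, hi⟩ ⟨j, hj⟩
    simpa [toSquareBlock_def, one_apply, Subtype.ext_iff] using hone i j (hi.trans hj.symm).ge
  rw [this, det_one]

theorem det_parentMatrix_of_not_reaches {q : Fin (n + 1) → Fin (n + 1)} {v : Fin (n + 1)}
    (hv : ∀ k, q^[k] v ≠ 0) : (parentMatrix q : Matrix (Fin n) (Fin n) R).det = 0 := by
  let f : Fin (n + 1) → R := fun u => if ∃ k, q^[k] u = 0 then 0 else 1
  have hf0 : f 0 = 0 := if_pos ⟨0, rfl⟩
  have hker : parentMatrix q *ᵥ (f ∘ Fin.succ) = 0 := by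
    ext x
    change reducedIncidence (q x.succ) x.succ ⬝ᵥ (f ∘ Fin.succ) = 0
    rw [reducedIncidence_dotProduct _ _ hf0, sub_eq_zero]
    simp only [f, exists_iterate_apply_eq_iff (Fin.succ_ne_zero x)]
  have hv0 : v ≠ 0 := hv 0
  refine det_eq_zero_of_mulVec_eq_zero_of_mem_nonZeroDivisors hker (i := v.pred hv0) ?_
  simp [f, hv, one_mem]

end Determinant

section Arborescence

variable {n : ℕ} {E : Type*} {s t : E → Fin (n + 1)} {r : Fin n → E}

def parentMap (s : E → Fin (n + 1)) (r : Fin n → E) : Fin (n + 1) → Fin (n + 1) :=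
  Fin.cases 0 fun j => s (r j)

@[simp]
theorem parentMap_succ (j : Fin n) : parentMap s r j.succ = s (r j) := rfl

theorem injective_of_target_eq_succ (htr : ∀ j, t (r j) = j.succ) : Injective r :=
  fun x y h => Fin.succ_injective _ (by rw [← htr, ← htr, h])

theorem hasCycleIn_image_iff [DecidableEq E] (htr : ∀ j, t (r j) = j.succ) :
    HasCycleIn s t (univ.image r) ↔ ∃ v, ∀ k, (parentMap s r)^[k] v ≠ 0 := by
  constructor
  · rintro ⟨l, hl, hlS, hchain, hclose⟩
    let T : Set (Fin (n + 1)) := {v | ∃ e ∈ l, t e = v}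
    have hmaps : Set.MapsTo (parentMap s r) T T := by
      rintro _ ⟨e, he, rfl⟩
      obtain ⟨j, -, rfl⟩ := mem_image.1 (hlS e he)
      obtain ⟨e', he', hte'⟩ := exists_mem_rel_of_cyclic hl hchain hclose he
      exact ⟨e', he', by rw [hte', htr, parentMap_succ]⟩
    have h0 : 0 ∉ T := by
      rintro ⟨e, he, hte⟩
      obtain ⟨j, -, rfl⟩ := mem_image.1 (hlS e he)
      exact Fin.succ_ne_zero j (htr j ▸ hte)
    exact ⟨t (l.head hl), fun k hk => h0 (hk ▸ hmaps.iterate k ⟨_, List.head_mem hl, rfl⟩)⟩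
  · rintro ⟨v, hv⟩
    set q := parentMap s r
    obtain ⟨a, ha⟩ := exists_iterate_mem_periodicPts q v
    obtain ⟨m, hm, hper⟩ := mem_periodicPts.1 ha
    have hu : ∀ k, q^[k] (q^[a] v) ≠ 0 := fun k => by rw [← iterate_add_apply]; exact hv _
    let arc : ℕ → E := fun k => r ((q^[k] (q^[a] v)).pred (hu k))
    have harc_t : ∀ k, t (arc k) = q^[k] (q^[a] v) := fun k => by simp [arc, htr]
    have harc_s : ∀ k, s (arc k) = q^[k + 1] (q^[a] v) := fun k => by
      rw [iterate_succ_apply', ← Fin.succ_pred _ (hu k)]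
      rfl
    refine hasCycleIn_of_reverse_closed_walk arc hm (fun k => mem_image_of_mem r (mem_univ _))
      (fun k => by rw [harc_t, harc_s]) ?_
    rw [harc_t, harc_s, Nat.sub_add_cancel hm, iterate_zero_apply]
    exact hper.symm

theorem transpose_eq_of_sum_smul_reducedIncidence {R : Type*} [CommRing R] [Fintype E]
    {w : E → R} (hs : ∀ e, s e ≠ t e) {A : Matrix (Fin n) (Fin n) R}
    (hAdiag : ∀ i : Fin n, A i i = ∑ e ∈ univ.filter (fun e => t e = i.succ), w e)
    (hAoff : ∀ i j : Fin n, i ≠ j →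
      A i j = -∑ e ∈ univ.filter (fun e => s e = i.succ ∧ t e = j.succ), w e) :
    Aᵀ = of fun j => ∑ e ∈ univ.filter (t · = j.succ), w e • reducedIncidence (s e) (t e) := by
  ext j i
  simp only [transpose_apply, of_apply, Finset.sum_apply, Pi.smul_apply, smul_eq_mul,
    reducedIncidence, Pi.sub_apply, Pi.single_apply]
  rcases eq_or_ne i j with rfl | hij
  · rw [hAdiag]
    refine sum_congr rfl fun e he => ?_
    have hte : t e = i.succ := (mem_filter.1 he).2
    have hse : i.succ ≠ s e := fun h => hs e (h.symm.trans hte.symm)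
    rw [if_pos hte.symm, if_neg hse, sub_zero, mul_one]
  · have hterm : ∀ e ∈ univ.filter (t · = j.succ), w e * ((if i.succ = t e then 1 else 0) -
        if i.succ = s e then 1 else 0) = -if s e = i.succ then w e else 0 := fun e he => by
      have hte : i.succ ≠ t e := by
        rw [(mem_filter.1 he).2]
        exact (Fin.succ_injective _).ne hij
      simp [hte, eq_comm]
    rw [hAoff i j hij, sum_congr rfl hterm, sum_neg_distrib, ← sum_filter, filter_filter]
    simp only [and_comm]

theorem eq_of_image_eq [DecidableEq E] {r' : Fin n → E} (htr : ∀ j, t (r j) = j.succ)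
    (htr' : ∀ j, t (r' j) = j.succ) (h : univ.image r = univ.image r') : r = r' := by
  funext j
  obtain ⟨j', -, hj'⟩ := mem_image.1 (h ▸ mem_image_of_mem r (mem_univ j))
  obtain rfl : j' = j := Fin.succ_injective _ (by rw [← htr', hj', htr])
  exact hj'.symm

theorem isArbor_image_iff [DecidableEq E] (htr : ∀ j, t (r j) = j.succ) :
    IsArbor n s t (univ.image r) ↔ ∀ v, ∃ k, (parentMap s r)^[k] v = 0 := by
  have hcard : (univ.image r).card = n := by
    rw [card_image_of_injective _ (injective_of_target_eq_succ htr), card_univ, Fintype.card_fin]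
  have hunique : ∀ i : Fin (n + 1), i ≠ 0 → ∃! e, e ∈ univ.image r ∧ t e = i := by
    intro i hi
    refine ⟨r (i.pred hi), ⟨mem_image_of_mem r (mem_univ _), by rw [htr, Fin.succ_pred]⟩, ?_⟩
    rintro _ ⟨he, rfl⟩
    obtain ⟨j, -, rfl⟩ := mem_image.1 he
    simp [htr]
  rw [IsArbor, hasCycleIn_image_iff htr]
  simp only [not_exists, not_forall, not_not]
  exact ⟨fun h => h.2.2, fun h => ⟨hcard, hunique, h⟩⟩

theorem det_reducedIncidence_eq_ite_isArbor {R : Type*} [CommRing R] [DecidableEq E]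
    (htr : ∀ j, t (r j) = j.succ) :
    (of fun j => reducedIncidence (s (r j)) (t (r j)) : Matrix (Fin n) (Fin n) R).det =
      if IsArbor n s t (univ.image r) then 1 else 0 := by
  have hrows : (of fun j => reducedIncidence (s (r j)) (t (r j)) : Matrix (Fin n) (Fin n) R) =
      parentMatrix (parentMap s r) := by
    simp only [parentMatrix, parentMap_succ, htr]
  rw [hrows, isArbor_image_iff htr]
  split_ifs with hroot
  · exact det_parentMatrix_of_forall_reaches hroot
  · obtain ⟨v, hv⟩ := not_forall.1 hroot
    exact det_parentMatrix_of_not_reaches (not_exists.1 hv)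

theorem exists_eq_image_of_isArbor [DecidableEq E] {S : Finset E} (hS : IsArbor n s t S) :
    ∃ r : Fin n → E, (∀ j, t (r j) = j.succ) ∧ univ.image r = S := by
  obtain ⟨hcard, hunique, -⟩ := hS
  choose r hrS hrt using fun j : Fin n => (hunique j.succ (Fin.succ_ne_zero j)).exists
  refine ⟨r, hrt, eq_of_subset_of_card_le ?_ ?_⟩
  · intro e he
    obtain ⟨j, -, rfl⟩ := mem_image.1 he
    exact hrS j
  · rw [hcard, card_image_of_injective _ (injective_of_target_eq_succ hrt), card_univ,
      Fintype.card_fin]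

theorem sum_isArbor_eq_sum_piFinset [DecidableEq E] [Fintype E] {M : Type*} [AddCommMonoid M]
    (f : Finset E → M) :
    ∑ S ∈ univ.filter (IsArbor n s t), f S =
      ∑ r ∈ Fintype.piFinset fun j : Fin n => univ.filter (t · = j.succ),
        if IsArbor n s t (univ.image r) then f (univ.image r) else 0 := by
  set P := Fintype.piFinset fun j : Fin n => univ.filter (t · = j.succ)
  have hP : ∀ r, r ∈ P ↔ ∀ j, t (r j) = j.succ := fun r => by simp [P, Fintype.mem_piFinset]
  have himage : univ.filter (IsArbor n s t) =
      (P.filter fun r => IsArbor n s t (univ.image r)).image (univ.image ·) := by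
    ext S
    simp only [mem_filter, mem_univ, true_and, mem_image, hP]
    constructor
    · intro hS
      obtain ⟨r, hrt, rfl⟩ := exists_eq_image_of_isArbor hS
      exact ⟨r, ⟨hrt, hS⟩, rfl⟩
    · rintro ⟨r, ⟨-, hr⟩, rfl⟩
      exact hr
  rw [← sum_filter, himage, sum_image]
  intro r₁ h₁ r₂ h₂ h
  exact eq_of_image_eq ((hP r₁).1 (mem_filter.1 h₁).1) ((hP r₂).1 (mem_filter.1 h₂).1) h

end Arborescence

end MatrixTree

open MatrixTree

theorem det_eq_sum_arborescence_weights_general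
    (n : ℕ) (R : Type*) [CommRing R]
    (E : Type*) [Fintype E]
    (s t : E → Fin (n + 1)) (w : E → R)
    (hs : ∀ e, s e ≠ t e)
    (A : Matrix (Fin n) (Fin n) R)
    (hAdiag : ∀ i : Fin n, A i i = ∑ e ∈ Finset.univ.filter (fun e => t e = i.succ), w e)
    (hAoff : ∀ i j : Fin n, i ≠ j →
      A i j = -∑ e ∈ Finset.univ.filter (fun e => s e = i.succ ∧ t e = j.succ), w e) :
    A.det = ∑ S ∈ Finset.univ.filter (IsArbor n s t), ∏ e ∈ S, w e := by
  classical
  have hterm : ∀ r ∈ Fintype.piFinset fun j : Fin n => univ.filter (t · = j.succ),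
      (∏ j, w (r j)) * (of fun j => reducedIncidence (s (r j)) (t (r j))).det =
        if IsArbor n s t (univ.image r) then ∏ e ∈ univ.image r, w e else 0 := by
    intro r hr
    have htr : ∀ j, t (r j) = j.succ := fun j => by simpa using Fintype.mem_piFinset.1 hr j
    rw [det_reducedIncidence_eq_ite_isArbor htr,
      prod_image fun _ _ _ _ h => injective_of_target_eq_succ htr h]
    split_ifs <;> simp
  rw [← det_transpose, transpose_eq_of_sum_smul_reducedIncidence hs hAdiag hAoff,
    det_of_sum_smul_rows, sum_congr rfl hterm, sum_isArbor_eq_sum_piFinset]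

/-- **matrix-tree theorem.** The determinant of the matrix of a weighted matrix
digraph equals the sum, over all arborescences `S`, of the products of the arc weights of `S`. -/
theorem det_eq_sum_arborescence_weights
    (n : ℕ) (hn : 1 ≤ n) (R : Type*) [CommRing R]
    (E : Type*) [Fintype E] [DecidableEq E]
    (s t : E → Fin (n + 1)) (w : E → R)
    (ht : ∀ e, t e ≠ 0) (hs : ∀ e, s e ≠ t e)
    (A : Matrix (Fin n) (Fin n) R)
    (hAdiag : ∀ i : Fin n, A i i = ∑ e ∈ Finset.univ.filter (fun e => t e = i.succ), w e)
    (hAoff : ∀ i j : Fin n, i ≠ j →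
      A i j = -∑ e ∈ Finset.univ.filter (fun e => s e = i.succ ∧ t e = j.succ), w e) :
    A.det = ∑ S ∈ Finset.univ.filter (IsArbor n s t), ∏ e ∈ S, w e :=
  det_eq_sum_arborescence_weights_general n R E s t w hs A hAdiag hAoff
end

section
/- Let n ≥ 1, let R be a commutative ring, let A be an n×n matrix over R, and let 1 ≤ m ≤ n. Let p_1,…,p_m and q_1,…,q_m be two lists of distinct elements of {1,…,n}, and let q̃_1,…,q̃_m be a rearrangement of q_1,…,q_m, given by a permutation τ of {1,…,m} via q̃_k = q_{τ(k)}. Let A^{P,Q} denote the matrix obtained from A by replacing, for each k, column q_k by the column that is 0 everywhere except for a 1 in row p_k; similarly let A^{P,Q̃} be obtained from A by replacing, for each k, column q̃_k by the column that is 0 everywhere except for a 1 in row p_k. Then det(A^{P,Q}) = sgn(τ) · det(A^{P,Q̃}). -/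
attribute [local instance] Classical.propDecidable

/-- The reduced matrix `A^{P,Q}`: for each `k`, column `q k` of `A` is replaced by the column
which is `0` everywhere except for a `1` in row `p k`. -/
noncomputable def reducedMatrix {n m : ℕ} {R : Type*} [CommRing R]
    (A : Matrix (Fin n) (Fin n) R) (p q : Fin m → Fin n) : Matrix (Fin n) (Fin n) R :=
  fun i j => if ∃ k, q k = j ∧ p k = i then 1 else if ∃ k, q k = j then 0 else A i j

/-- Rearranging the list `Q` by a permutation `τ` (so `q̃ k = q (τ k)`)
changes the determinant of the reduced matrix by the sign of `τ`:
`det(A^{P,Q}) = sgn(τ) · det(A^{P,Q̃})`. -/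
theorem det_reducedMatrix_rearrange
    (n m : ℕ) (hn : 1 ≤ n) (hm : 1 ≤ m) (hmn : m ≤ n)
    (R : Type*) [CommRing R]
    (A : Matrix (Fin n) (Fin n) R)
    (p q : Fin m → Fin n) (hp : Function.Injective p) (hq : Function.Injective q)
    (τ : Equiv.Perm (Fin m)) :
    (reducedMatrix A p q).det =
      ((Equiv.Perm.sign τ : ℤ) : R) * (reducedMatrix A p (q ∘ τ)).det := by
  classical
  set f : Fin m ↪ Fin n := ⟨q, hq⟩ with hf
  set σ : Equiv.Perm (Fin n) := Equiv.Perm.viaFintypeEmbedding τ⁻¹ f with hσ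
  have key : reducedMatrix A p (q ∘ τ) = (reducedMatrix A p q).submatrix id σ := by
    ext i j
    simp only [reducedMatrix, Matrix.submatrix_apply, id_eq, Function.comp]
    by_cases hj : ∃ l, q l = j
    · obtain ⟨l, rfl⟩ := hj
      have hσj : σ (q l) = q (τ⁻¹ l) :=
        Equiv.Perm.viaFintypeEmbedding_apply_image τ⁻¹ f l
      rw [hσj]
      have h1 : (∃ k, q (τ k) = q l ∧ p k = i) ↔ p (τ⁻¹ l) = i := by
        constructor
        · rintro ⟨k, hk1, hk2⟩
          have : τ k = l := hq hk1
          subst hk2; rw [← this]; simp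
        · intro h; exact ⟨τ⁻¹ l, by simp, h⟩
      have h2 : (∃ k, q k = q (τ⁻¹ l) ∧ p k = i) ↔ p (τ⁻¹ l) = i := by
        constructor
        · rintro ⟨k, hk1, hk2⟩
          have : k = τ⁻¹ l := hq hk1
          subst this; exact hk2
        · intro h; exact ⟨τ⁻¹ l, rfl, h⟩
      have h3 : (∃ k, q (τ k) = q l) := ⟨τ⁻¹ l, by simp⟩
      have h4 : (∃ k, q k = q (τ⁻¹ l)) := ⟨τ⁻¹ l, rfl⟩
      by_cases hi : p (τ⁻¹ l) = i
      · rw [if_pos (h1.mpr hi), if_pos (h2.mpr hi)]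
      · rw [if_neg (fun h => hi (h1.mp h)), if_neg (fun h => hi (h2.mp h)),
          if_pos h3, if_pos h4]
    · have hσj : σ j = j :=
        Equiv.Perm.viaFintypeEmbedding_apply_notMem_range τ⁻¹ f
          (by rintro ⟨l, hl⟩; exact hj ⟨l, hl⟩)
      rw [hσj]
      have h1 : ¬ ∃ k, q (τ k) = j ∧ p k = i := fun ⟨k, hk, _⟩ => hj ⟨τ k, hk⟩
      have h2 : ¬ ∃ k, q k = j ∧ p k = i := fun ⟨k, hk, _⟩ => hj ⟨k, hk⟩
      have h3 : ¬ ∃ k, q (τ k) = j := fun ⟨k, hk⟩ => hj ⟨τ k, hk⟩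
      have h4 : ¬ ∃ k, q k = j := hj
      rw [if_neg h1, if_neg h2, if_neg h3, if_neg h4]
  have hsign : Equiv.Perm.sign σ = Equiv.Perm.sign τ := by
    rw [hσ, Equiv.Perm.viaFintypeEmbedding_sign, map_inv]
    exact (Int.units_inv_eq_self _)
  rw [key, Matrix.det_permute', hsign]
  rw [← mul_assoc, ← Int.cast_mul, ← Units.val_mul, ← map_mul]
  simp
end

section
/- Let n ≥ 1, let R be a commutative ring, and let a weighted matrix digraph on vertices {0,1,…,n} be given by a finite arc type E with source map s, target map t and weight map w as above. Let q̃_1,…,q̃_m and p_1,…,p_m be lists of distinct elements of {1,…,n}. Consider subsets B ⊆ E such that: B contains no arc whose target lies in {q̃_1,…,q̃_m}; every vertex i ∈ {1,…,n} \ {q̃_1,…,q̃_m} is the target of exactly one arc of B; and B contains no directed cycle even after adjoining, for each k, a formal root arc from 0 to q̃_k. Suppose B is such a subset and there exists an index j such that q̃_j ≠ p_j and there is no directed path within B from q̃_j to any vertex p_ℓ, ℓ ∈ {1,…,m}. Then the subset B' = B ∪ {e*}, for any arc e* with s(e*) = p_j and t(e*) = q̃_j, differs from B only in that the vertex q̃_j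 acquires the single in-arc e*, and replacing the weight-1 root arc to q̃_j by the weight-(−1) arc (p_j, q̃_j) changes the sign of the total weight; consequently, in the sum of signed weights over all spanning branchings of the digraph of the reduced matrix A^{P,Q̃} (where each vertex q̃_k receives a root arc of weight 1 and, if p_k ≠ q̃_k, an arc from p_k of weight −1), the contributions of all branchings containing a root q̃_j with no path to any p_ℓ cancel in pairs, so their total contribution is 0. -/
attribute [local instance] Classical.propDecidable

/-- A directed path within the arc set `S` from `u` to `v`: a nonempty list of arcs `e₁,…,e_r`
of `S` with `s e₁ = u`, `t eₖ = s eₖ₊₁` for `k < r`, and `t e_r = v`. -/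
def HasPathIn {V E : Type*} (s t : E → V) (S : Finset E) (u v : V) : Prop :=
  ∃ (l : List E) (hl : l ≠ []), (∀ e ∈ l, e ∈ S) ∧
    List.Chain' (fun e f => t e = s f) l ∧ s (l.head hl) = u ∧ t (l.getLast hl) = v

/-- The arc type of the matrix digraph of the reduced matrix `A^{P,Q̃}`: the original arcs
whose target is not a `q̃ k`, together with, for each `k`, a root arc `(0, q̃ k)` of weight `1`
and, whenever `p k ≠ q̃ k`, an arc `(p k, q̃ k)` of weight `-1`. -/
abbrev ReducedArcs {E : Type*} {n m : ℕ} (t : E → Fin (n + 1)) (qt p : Fin m → Fin n) :=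
  {e : E // ∀ k, t e ≠ (qt k).succ} ⊕ Fin m ⊕ {k : Fin m // p k ≠ qt k}

/-- Source map of the reduced digraph. -/
def redSrc {E : Type*} {n m : ℕ} (s t : E → Fin (n + 1)) (qt p : Fin m → Fin n) :
    ReducedArcs t qt p → Fin (n + 1) :=
  Sum.elim (fun e => s e.1) (Sum.elim (fun _ => 0) (fun k => (p k.1).succ))

/-- Target map of the reduced digraph. -/
def redTgt {E : Type*} {n m : ℕ} (t : E → Fin (n + 1)) (qt p : Fin m → Fin n) :
    ReducedArcs t qt p → Fin (n + 1) :=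
  Sum.elim (fun e => t e.1) (Sum.elim (fun k => (qt k).succ) (fun k => (qt k.1).succ))

/-- Weight map of the reduced digraph: original weights, weight `1` on the root arcs
`(0, q̃ k)`, and weight `-1` on the arcs `(p k, q̃ k)`. -/
def redWt {E : Type*} {n m : ℕ} {R : Type*} [CommRing R]
    (t : E → Fin (n + 1)) (w : E → R) (qt p : Fin m → Fin n) :
    ReducedArcs t qt p → R :=
  Sum.elim (fun e => w e.1) (Sum.elim (fun _ => (1 : R)) (fun _ => (-1 : R)))

/-!
A bad index `j` lets us toggle the in-arc of `q̃ j` between the root arc (weight `1`) and the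
arc `(p j, q̃ j)` (weight `-1`). The result is again a branching: a new cycle would need a path
from `q̃ j` back to `p j` or to the root, and neither exists. Only arcs into `q̃ j` change, and
`q̃ j` reaches no `p ℓ`, so every path to a `p ℓ` survives the toggle and the set of bad indices
is unchanged. Toggling at the least bad index is thus a sign-reversing involution on the bad
branchings.
-/

open Relation

section ArcPaths

variable {V E : Type*} {s t : E → V} {S S' : Finset E} {u v x y : V}

def arcRel (s t : E → V) (S : Finset E) (x y : V) : Prop :=
  ∃ e ∈ S, s e = x ∧ t e = y

theorem arcRel_mono (h : S ⊆ S') : arcRel s t S ≤ arcRel s t S' :=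
  fun _ _ ⟨e, he, hs, ht⟩ => ⟨e, h he, hs, ht⟩

theorem transGen_of_isChain {e : E} {l : List E} (hl : ∀ f ∈ e :: l, f ∈ S)
    (hc : List.IsChain (fun e f => t e = s f) (e :: l)) :
    TransGen (arcRel s t S) (s e) (t ((e :: l).getLast (List.cons_ne_nil e l))) := by
  induction l generalizing e with
  | nil => exact .single ⟨e, hl e (by simp), rfl, rfl⟩
  | cons f l ih =>
    obtain ⟨hef, hc⟩ := List.isChain_cons_cons.mp hc
    have hpath := ih (fun g hg => hl g (List.mem_cons_of_mem e hg)) hc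
    rw [List.getLast_cons_cons]
    exact .head ⟨e, hl e (by simp), rfl, hef⟩ hpath

theorem hasPathIn_iff_transGen : HasPathIn s t S u v ↔ TransGen (arcRel s t S) u v := by
  constructor
  · rintro ⟨_ | ⟨e, l⟩, hl, hmem, hc, rfl, rfl⟩
    · exact absurd rfl hl
    · exact transGen_of_isChain hmem hc
  · intro h
    induction h using TransGen.head_induction_on with
    | single h =>
      obtain ⟨e, he, rfl, rfl⟩ := h
      exact ⟨[e], by simp, by simpa using he, .singleton e, rfl, rfl⟩
    | head h _ ih =>
      obtain ⟨e, he, rfl, hte⟩ := h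
      obtain ⟨_ | ⟨f, l⟩, hl, hmem, hc, hhead, rfl⟩ := ih
      · exact absurd rfl hl
      refine ⟨e :: f :: l, by simp, ?_, List.isChain_cons_cons.mpr ⟨hte.trans hhead.symm, hc⟩,
        rfl, by rw [List.getLast_cons_cons]⟩
      simpa [he] using hmem

theorem hasCycleIn_iff_exists_transGen :
    HasCycleIn s t S ↔ ∃ u, TransGen (arcRel s t S) u u := by
  constructor
  · rintro ⟨l, hl, hmem, hc, hcycle⟩
    exact ⟨_, hasPathIn_iff_transGen.mp ⟨l, hl, hmem, hc, rfl, hcycle⟩⟩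
  · rintro ⟨u, h⟩
    obtain ⟨l, hl, hmem, hc, hhead, hlast⟩ := hasPathIn_iff_transGen.mpr h
    exact ⟨l, hl, hmem, hc, hlast.trans hhead.symm⟩

theorem HasCycleIn.mono (h : S ⊆ S') (hS : HasCycleIn s t S) : HasCycleIn s t S' := by
  obtain ⟨u, hu⟩ := hasCycleIn_iff_exists_transGen.mp hS
  exact hasCycleIn_iff_exists_transGen.mpr ⟨u, TransGen.mono (arcRel_mono h) _ _ hu⟩

theorem transGen_erase_or [DecidableEq E] (a : E) (h : TransGen (arcRel s t S) u v) :
    TransGen (arcRel s t (S.erase a)) u v ∨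
      ReflTransGen (arcRel s t (S.erase a)) u (s a) ∧
        ReflTransGen (arcRel s t (S.erase a)) (t a) v := by
  induction h with
  | single h =>
    obtain ⟨e, he, rfl, rfl⟩ := h
    by_cases hea : e = a
    · exact .inr ⟨hea ▸ .refl, hea ▸ .refl⟩
    · exact .inl (.single ⟨e, Finset.mem_erase.mpr ⟨hea, he⟩, rfl, rfl⟩)
  | tail _ h ih =>
    obtain ⟨e, he, rfl, rfl⟩ := h
    by_cases hea : e = a
    · subst hea
      exact .inr ⟨ih.elim TransGen.to_reflTransGen And.left, .refl⟩
    · have hstep : arcRel s t (S.erase a) (s e) (t e) :=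
        ⟨e, Finset.mem_erase.mpr ⟨hea, he⟩, rfl, rfl⟩
      exact ih.imp (·.tail hstep) fun ⟨h₁, h₂⟩ => ⟨h₁, h₂.tail hstep⟩

theorem not_hasCycleIn_insert [DecidableEq E] {b : E} (hS : ¬HasCycleIn s t S)
    (hb : ¬ReflTransGen (arcRel s t S) (t b) (s b)) : ¬HasCycleIn s t (insert b S) := by
  rintro hcycle
  obtain ⟨u, hu⟩ := hasCycleIn_iff_exists_transGen.mp hcycle
  have hsub := arcRel_mono (s := s) (t := t) (Finset.erase_insert_subset b S)
  rcases transGen_erase_or b hu with h | ⟨h₁, h₂⟩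
  · exact hS (hasCycleIn_iff_exists_transGen.mpr ⟨u, TransGen.mono hsub _ _ h⟩)
  · exact hb (ReflTransGen.mono hsub _ _ (h₂.trans h₁))

theorem eq_of_reflTransGen_of_forall_ne {z : V} (hz : ∀ e, t e ≠ z)
    (h : ReflTransGen (arcRel s t S) x z) : x = z := by
  rcases h.cases_tail with h | ⟨_, _, e, _, _, hte⟩
  · exact h.symm
  · exact absurd hte (hz e)

/-- Cutting a path at its last visit to `v`. -/
theorem reflTransGen_or_of_reflTransGen (v : V) (h : ReflTransGen (arcRel s t S) x y) :
    ReflTransGen (fun a b => arcRel s t S a b ∧ b ≠ v) x y ∨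
      ReflTransGen (fun a b => arcRel s t S a b ∧ b ≠ v) v y := by
  induction h with
  | refl => exact .inl .refl
  | @tail c y _ hcy ih =>
    by_cases hy : y = v
    · exact .inr (hy ▸ .refl)
    · exact ih.imp (·.tail ⟨hcy, hy⟩) (·.tail ⟨hcy, hy⟩)

theorem le_arcRel_of_agreeOff (hSS' : ∀ e, t e ≠ v → e ∈ S → e ∈ S') :
    (fun a b => arcRel s t S a b ∧ b ≠ v) ≤ arcRel s t S' :=
  fun _ _ ⟨⟨e, he, hs, ht⟩, hv⟩ => ⟨e, hSS' e (ht ▸ hv) he, hs, ht⟩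

theorem reflTransGen_of_agreeOff (hSS' : ∀ e, t e ≠ v → e ∈ S → e ∈ S')
    (h : ReflTransGen (arcRel s t S) v y) : ReflTransGen (arcRel s t S') v y :=
  ReflTransGen.mono (le_arcRel_of_agreeOff hSS') _ _
    ((reflTransGen_or_of_reflTransGen v h).elim id id)

theorem reflTransGen_of_agreeOff_of_not (hSS' : ∀ e, t e ≠ v → e ∈ S → e ∈ S')
    (hv : ¬ReflTransGen (arcRel s t S) v y) (h : ReflTransGen (arcRel s t S) x y) :
    ReflTransGen (arcRel s t S') x y := by
  rcases reflTransGen_or_of_reflTransGen v h with h | h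
  · exact ReflTransGen.mono (le_arcRel_of_agreeOff hSS') _ _ h
  · exact absurd (ReflTransGen.mono (fun _ _ => And.left) _ _ h) hv

theorem existsUnique_mem_map_equiv {f : E ≃ E} (hf : ∀ e, t (f e) = t e) {i : V}
    (h : ∃! e, e ∈ S ∧ t e = i) : ∃! e, e ∈ S.map f.toEmbedding ∧ t e = i := by
  obtain ⟨e, ⟨he, hte⟩, huniq⟩ := h
  refine ⟨f e, ⟨Finset.mem_map_of_mem _ he, (hf e).trans hte⟩, fun e' ⟨he', hte'⟩ => ?_⟩
  rw [Finset.mem_map_equiv] at he'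
  rw [← huniq _ ⟨he', by rw [← hf, Equiv.apply_symm_apply, hte']⟩, Equiv.apply_symm_apply]

end ArcPaths

theorem Finset.map_swap_of_mem_of_notMem {α : Type*} [DecidableEq α] {S : Finset α} {x y : α}
    (hx : x ∈ S) (hy : y ∉ S) : S.map (Equiv.swap x y).toEmbedding = insert y (S.erase x) := by
  ext e
  rw [Finset.mem_map_equiv, Equiv.symm_swap, Finset.mem_insert, Finset.mem_erase,
    Equiv.swap_apply_def]
  split_ifs <;> aesop

section ReducedDigraph

variable {E : Type*} {n m : ℕ} {s t : E → Fin (n + 1)} {qt p : Fin m → Fin n}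

def rootArc (j : Fin m) : ReducedArcs t qt p := .inr (.inl j)

/-- The arc `(p j, q̃ j)` of weight `-1`; when `p j = q̃ j` there is none, and the root arc
stands in for it, so that `toggle` below is the identity. -/
noncomputable def negArc (j : Fin m) : ReducedArcs t qt p :=
  if h : p j ≠ qt j then .inr (.inr ⟨j, h⟩) else rootArc j

theorem negArc_of_ne {j : Fin m} (h : p j ≠ qt j) :
    (negArc j : ReducedArcs t qt p) = .inr (.inr ⟨j, h⟩) := dif_pos h

theorem rootArc_ne_negArc {j : Fin m} (h : p j ≠ qt j) :
    (rootArc j : ReducedArcs t qt p) ≠ negArc j := by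
  simp [negArc_of_ne h, rootArc]

@[simp] theorem redSrc_rootArc (j : Fin m) : redSrc s t qt p (rootArc j) = 0 := rfl

@[simp] theorem redTgt_rootArc (j : Fin m) : redTgt t qt p (rootArc j) = (qt j).succ := rfl

@[simp] theorem redWt_rootArc {R : Type*} [CommRing R] (w : E → R) (j : Fin m) :
    redWt t w qt p (rootArc j) = 1 := rfl

theorem redSrc_negArc {j : Fin m} (h : p j ≠ qt j) :
    redSrc s t qt p (negArc j) = (p j).succ := by
  rw [negArc_of_ne h]; rfl

@[simp] theorem redTgt_negArc (j : Fin m) : redTgt t qt p (negArc j) = (qt j).succ := by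
  unfold negArc; split_ifs <;> rfl

theorem redWt_negArc {R : Type*} [CommRing R] (w : E → R) {j : Fin m} (h : p j ≠ qt j) :
    redWt t w qt p (negArc j) = -1 := by
  rw [negArc_of_ne h]; rfl

theorem redTgt_ne_zero (ht : ∀ e, t e ≠ 0) (e : ReducedArcs t qt p) : redTgt t qt p e ≠ 0 := by
  rcases e with ⟨e, -⟩ | k | ⟨k, -⟩
  exacts [ht e, Fin.succ_ne_zero _, Fin.succ_ne_zero _]

theorem eq_rootArc_or_negArc (hqt : Function.Injective qt) {e : ReducedArcs t qt p} {j : Fin m}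
    (h : redTgt t qt p e = (qt j).succ) : e = rootArc j ∨ e = negArc j := by
  rcases e with ⟨e, he⟩ | k | ⟨k, hk⟩
  · exact absurd h (he j)
  · obtain rfl : k = j := hqt (Fin.succ_injective _ h)
    exact .inl rfl
  · obtain rfl : k = j := hqt (Fin.succ_injective _ h)
    exact .inr (negArc_of_ne hk).symm

noncomputable def toggle (S : Finset (ReducedArcs t qt p)) (j : Fin m) :
    Finset (ReducedArcs t qt p) :=
  S.map (Equiv.swap (rootArc j) (negArc j)).toEmbedding

theorem toggle_toggle (S : Finset (ReducedArcs t qt p)) (j : Fin m) :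
    toggle (toggle S j) j = S := by
  ext e
  simp [toggle, Finset.mem_map_equiv]

theorem redTgt_swap (j : Fin m) (e : ReducedArcs t qt p) :
    redTgt t qt p (Equiv.swap (rootArc j) (negArc j) e) = redTgt t qt p e := by
  rw [Equiv.swap_apply_def]
  split_ifs <;> simp_all

theorem mem_toggle_of_redTgt_ne {S : Finset (ReducedArcs t qt p)} {j : Fin m}
    {e : ReducedArcs t qt p} (he : redTgt t qt p e ≠ (qt j).succ) : e ∈ toggle S j ↔ e ∈ S := by
  rw [toggle, Finset.mem_map_equiv, Equiv.symm_swap, Equiv.swap_apply_of_ne_of_ne]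
  · rintro rfl; exact he rfl
  · rintro rfl; exact he (redTgt_negArc j)

theorem toggle_eq_insert_erase (hqt : Function.Injective qt) {S : Finset (ReducedArcs t qt p)}
    (hS : IsArbor n (redSrc s t qt p) (redTgt t qt p) S) {j : Fin m} (h : p j ≠ qt j) :
    ∃ c ∈ S, ∃ b ∉ S, toggle S j = insert b (S.erase c) ∧
      (c = rootArc j ∧ b = negArc j ∨ c = negArc j ∧ b = rootArc j) := by
  obtain ⟨c, ⟨hc, hct⟩, huniq⟩ := hS.2.1 (qt j).succ (Fin.succ_ne_zero _)
  rcases eq_rootArc_or_negArc hqt hct with rfl | rfl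
  · have hb : negArc j ∉ S := fun hb =>
      rootArc_ne_negArc h (huniq _ ⟨hb, redTgt_negArc j⟩).symm
    exact ⟨_, hc, _, hb, Finset.map_swap_of_mem_of_notMem hc hb, .inl ⟨rfl, rfl⟩⟩
  · have hb : rootArc j ∉ S := fun hb =>
      rootArc_ne_negArc h (huniq _ ⟨hb, redTgt_rootArc j⟩)
    refine ⟨_, hc, _, hb, ?_, .inr ⟨rfl, rfl⟩⟩
    rw [toggle, Equiv.swap_comm, Finset.map_swap_of_mem_of_notMem hc hb]

theorem toggle_ne (hqt : Function.Injective qt) {S : Finset (ReducedArcs t qt p)}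
    (hS : IsArbor n (redSrc s t qt p) (redTgt t qt p) S) {j : Fin m} (h : p j ≠ qt j) :
    toggle S j ≠ S := by
  obtain ⟨c, -, b, hb, heq, -⟩ := toggle_eq_insert_erase hqt hS h
  exact fun hS' => hb (hS' ▸ heq ▸ Finset.mem_insert_self b _)

theorem prod_toggle {R : Type*} [CommRing R] (w : E → R) (hqt : Function.Injective qt)
    {S : Finset (ReducedArcs t qt p)} (hS : IsArbor n (redSrc s t qt p) (redTgt t qt p) S)
    {j : Fin m} (h : p j ≠ qt j) :
    ∏ e ∈ toggle S j, redWt t w qt p e = -∏ e ∈ S, redWt t w qt p e := by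
  obtain ⟨c, hc, b, hb, heq, hcb⟩ := toggle_eq_insert_erase hqt hS h
  rw [heq, Finset.prod_insert (fun hb' => hb (Finset.mem_of_mem_erase hb')),
    ← Finset.mul_prod_erase S _ hc]
  rcases hcb with ⟨rfl, rfl⟩ | ⟨rfl, rfl⟩ <;> simp [redWt_negArc w h]

def BadAt (s : E → Fin (n + 1)) (S : Finset (ReducedArcs t qt p)) (j : Fin m) : Prop :=
  p j ≠ qt j ∧
    ∀ ℓ, ¬ReflTransGen (arcRel (redSrc s t qt p) (redTgt t qt p) S) (qt j).succ (p ℓ).succ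

theorem badAt_iff {S : Finset (ReducedArcs t qt p)} {j : Fin m} :
    BadAt s S j ↔ qt j ≠ p j ∧ ∀ ℓ, ¬((qt j : Fin n) = p ℓ ∨
      HasPathIn (redSrc s t qt p) (redTgt t qt p) S (qt j).succ (p ℓ).succ) := by
  simp only [BadAt, reflTransGen_iff_eq_or_transGen, hasPathIn_iff_transGen, Fin.succ_inj,
    ne_comm, eq_comm]

theorem isArbor_toggle (hqt : Function.Injective qt) (ht : ∀ e, t e ≠ 0)
    {S : Finset (ReducedArcs t qt p)} (hS : IsArbor n (redSrc s t qt p) (redTgt t qt p) S)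
    {j : Fin m} (hj : BadAt s S j) :
    IsArbor n (redSrc s t qt p) (redTgt t qt p) (toggle S j) := by
  refine ⟨(Finset.card_map _).trans hS.1,
    fun i hi => existsUnique_mem_map_equiv (redTgt_swap j) (hS.2.1 i hi), ?_⟩
  obtain ⟨c, -, b, -, heq, hcb⟩ := toggle_eq_insert_erase hqt hS hj.1
  rw [heq]
  refine not_hasCycleIn_insert (fun hc => hS.2.2 (hc.mono (Finset.erase_subset c S)))
    fun hpath => ?_
  replace hpath := ReflTransGen.mono (arcRel_mono (Finset.erase_subset c S)) _ _ hpath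
  rcases hcb with ⟨-, rfl⟩ | ⟨-, rfl⟩
  · rw [redTgt_negArc, redSrc_negArc hj.1] at hpath
    exact hj.2 j hpath
  · exact Fin.succ_ne_zero _ (eq_of_reflTransGen_of_forall_ne (redTgt_ne_zero ht) hpath)

theorem badAt_toggle_iff {S : Finset (ReducedArcs t qt p)} {j : Fin m} (hj : BadAt s S j)
    (j' : Fin m) : BadAt s (toggle S j) j' ↔ BadAt s S j' := by
  have hS'S : ∀ e, redTgt t qt p e ≠ (qt j).succ → e ∈ toggle S j → e ∈ S :=
    fun _ he => (mem_toggle_of_redTgt_ne he).mp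
  have hSS' : ∀ e, redTgt t qt p e ≠ (qt j).succ → e ∈ S → e ∈ toggle S j :=
    fun _ he => (mem_toggle_of_redTgt_ne he).mpr
  have hj' : ∀ ℓ, ¬ReflTransGen (arcRel (redSrc s t qt p) (redTgt t qt p) (toggle S j))
      (qt j).succ (p ℓ).succ :=
    fun ℓ h => hj.2 ℓ (reflTransGen_of_agreeOff hS'S h)
  refine and_congr_right fun _ => forall_congr' fun ℓ => not_congr ⟨?_, ?_⟩
  exacts [reflTransGen_of_agreeOff_of_not hS'S (hj' ℓ),
    reflTransGen_of_agreeOff_of_not hSS' (hj.2 ℓ)]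

noncomputable def toggleFirstBad (s : E → Fin (n + 1)) (S : Finset (ReducedArcs t qt p)) :
    Finset (ReducedArcs t qt p) :=
  if h : (Finset.univ.filter (BadAt s S)).Nonempty then toggle S (Finset.min' _ h) else S

theorem toggleFirstBad_eq {S : Finset (ReducedArcs t qt p)} {j : Fin m} (hj : BadAt s S j)
    (hmin : ∀ j', BadAt s S j' → j ≤ j') : toggleFirstBad s S = toggle S j := by
  have hne : (Finset.univ.filter (BadAt s S)).Nonempty := ⟨j, by simpa using hj⟩
  rw [toggleFirstBad, dif_pos hne]
  congr
  exact le_antisymm (Finset.min'_le _ _ (by simpa using hj))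
    (Finset.le_min' _ _ _ fun j' hj' => hmin j' (by simpa using hj'))

theorem exists_toggleFirstBad_eq {S : Finset (ReducedArcs t qt p)} (h : ∃ j, BadAt s S j) :
    ∃ j, BadAt s S j ∧ (∀ j', BadAt s S j' → j ≤ j') ∧ toggleFirstBad s S = toggle S j := by
  obtain ⟨j, hj, hmin⟩ := Finset.exists_min_image (Finset.univ.filter (BadAt s S)) id
    (by obtain ⟨j, hj⟩ := h; exact ⟨j, by simpa using hj⟩)
  simp only [Finset.mem_filter, Finset.mem_univ, true_and, id] at hj hmin
  exact ⟨j, hj, hmin, toggleFirstBad_eq hj hmin⟩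

end ReducedDigraph

theorem sum_bad_branchings_eq_zero_general
    (n m : ℕ)
    (R : Type*) [CommRing R]
    (E : Type*) [Fintype E]
    (s t : E → Fin (n + 1)) (w : E → R)
    (ht : ∀ e, t e ≠ 0)
    (qt p : Fin m → Fin n)
    (hqt : Function.Injective qt) :
    ∑ S ∈ Finset.univ.filter (fun S : Finset (ReducedArcs t qt p) =>
        IsArbor n (redSrc s t qt p) (redTgt t qt p) S ∧
        ∃ j, qt j ≠ p j ∧
          ∀ ℓ, ¬ ((qt j : Fin n) = p ℓ ∨
            HasPathIn (redSrc s t qt p) (redTgt t qt p) S (qt j).succ (p ℓ).succ)),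
      ∏ e ∈ S, redWt t w qt p e = 0 := by
  simp only [← badAt_iff]
  refine Finset.sum_involution (fun S _ => toggleFirstBad s S) ?_ ?_ ?_ ?_ <;>
    intro S hS <;>
    obtain ⟨hS, j, hj, hmin, heq⟩ :=
      (Finset.mem_filter.mp hS).2.imp_right exists_toggleFirstBad_eq <;>
    rw [heq]
  · rw [prod_toggle w hqt hS hj.1, add_neg_cancel]
  · exact fun _ => toggle_ne hqt hS hj.1
  · exact Finset.mem_filter.mpr
      ⟨Finset.mem_univ _, isArbor_toggle hqt ht hS hj, j, (badAt_toggle_iff hj j).mpr hj⟩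
  · rw [toggleFirstBad_eq ((badAt_toggle_iff hj j).mpr hj)
      fun j' hj' => hmin j' ((badAt_toggle_iff hj j').mp hj'), toggle_toggle]

/-- In the sum of signed weights over all spanning branchings of the matrix
digraph of the reduced matrix `A^{P,Q̃}`, the contributions of those branchings containing a
rooted vertex `q̃ j` with `q̃ j ≠ p j` and no directed path from `q̃ j` to any vertex `p ℓ`
cancel in pairs (replacing the weight-`1` root arc to `q̃ j` by the weight-`(-1)` arc
`(p j, q̃ j)` flips the sign of the weight), so their total contribution is `0`. -/
theorem sum_bad_branchings_eq_zero
    (n m : ℕ) (hn : 1 ≤ n) (hm : 1 ≤ m)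
    (R : Type*) [CommRing R]
    (E : Type*) [Fintype E] [DecidableEq E]
    (s t : E → Fin (n + 1)) (w : E → R)
    (ht : ∀ e, t e ≠ 0) (hs : ∀ e, s e ≠ t e)
    (qt p : Fin m → Fin n)
    (hqt : Function.Injective qt) (hp : Function.Injective p) :
    ∑ S ∈ Finset.univ.filter (fun S : Finset (ReducedArcs t qt p) =>
        IsArbor n (redSrc s t qt p) (redTgt t qt p) S ∧
        ∃ j, qt j ≠ p j ∧
          ∀ ℓ, ¬ ((qt j : Fin n) = p ℓ ∨
            HasPathIn (redSrc s t qt p) (redTgt t qt p) S (qt j).succ (p ℓ).succ)),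
      ∏ e ∈ S, redWt t w qt p e = 0 :=
  sum_bad_branchings_eq_zero_general n m R E s t w ht qt p hqt
end

section
/- Let n ≥ 1 and let R be a commutative ring. Let D be a finite type of arcs on the vertex set {0,1,…,n} with source map s_D, target map t_D and weight map w_D satisfying t_D(e) ≠ 0 and s_D(e) ≠ t_D(e) for all e. Let a, b, c ∈ {0,1,…,n} with b ≠ 0, a ≠ b, c ≠ b, and let ω ∈ R. Let Γ be the weighted matrix digraph whose arcs are D together with one extra arc e from a to b of weight ω, and let Γ' be the weighted matrix digraph whose arcs are D together with one extra arc e' from c to b of weight ω. Suppose that a and b are not strongly connected in Γ (i.e. it is not the case that both a directed path from a to b and a directed path from b to a exist among the arcs of Γ) and that c and b are not strongly connected in Γ'. Then the sum of arborescence weights of Γ equals the sum of arborescence weights of Γ': Σ_{S arborescence of Γ} ∏_{f∈S} w(f) = Σ_{S' arborescence of Γ'} ∏_{f∈S'} w(f). -/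
/-!
The moved arc `x` lies on no directed cycle of either digraph: rotating a cycle through an arc
`u → b` leaves a path `b → u`, which together with the arc itself would make `u` and `b` strongly
connected. A cycle avoiding `x` does not see the tail of `x`, so an arc set contains a cycle in
`Γ` iff it does in `Γ'`. As `Γ` and `Γ'` have the same arcs, targets and weights, they have the
same arborescences with the same weights.
-/

attribute [local instance] Classical.propDecidable

/-- Vertices `u` and `v` are strongly connected in the digraph with arcs `E`: there is a
directed path from `u` to `v` and one from `v` to `u` among all arcs. -/
def StronglyConnectedIn {V E : Type*} [Fintype E] (s t : E → V) (u v : V) : Prop :=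
  HasPathIn s t Finset.univ u v ∧ HasPathIn s t Finset.univ v u

section

variable {V E : Type*} {s s' t : E → V} {S : Finset E}

theorem hasPathIn_singleton {e : E} (he : e ∈ S) : HasPathIn s t S (s e) (t e) :=
  ⟨[e], List.cons_ne_nil _ _, by simpa using he, List.isChain_singleton _, rfl, rfl⟩

theorem HasPathIn.mono {T : Finset E} {u v : V} (h : HasPathIn s t S u v) (hST : S ⊆ T) :
    HasPathIn s t T u v := by
  obtain ⟨l, hl, hS, hc, hu, hv⟩ := h
  exact ⟨l, hl, fun e he => hST (hS e he), hc, hu, hv⟩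

theorem hasPathIn_of_isChain_cons_append_singleton {x : E} {m : List E}
    (hS : ∀ e ∈ x :: m, e ∈ S) (hc : List.IsChain (fun e f => t e = s f) (x :: (m ++ [x]))) :
    HasPathIn s t S (t x) (s x) := by
  cases m with
  | nil =>
    rw [List.nil_append, List.isChain_pair] at hc
    simpa [hc] using hasPathIn_singleton (s := s) (t := t) (hS x List.mem_cons_self)
  | cons y m =>
    rw [List.cons_append, List.isChain_cons_cons, ← List.cons_append, List.isChain_append] at hc
    obtain ⟨hxy, hchain, -, hlast⟩ := hc
    refine ⟨y :: m, List.cons_ne_nil _ _, fun e he => hS e (List.mem_cons_of_mem _ he), hchain,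
      hxy.symm, hlast _ ?_ x rfl⟩
    exact List.getLast?_eq_some_getLast (List.cons_ne_nil _ _)

theorem hasPathIn_of_mem_cycle {l : List E} (hl : l ≠ []) (hS : ∀ e ∈ l, e ∈ S)
    (hc : List.IsChain (fun e f => t e = s f) l) (hcyc : t (l.getLast hl) = s (l.head hl))
    {x : E} (hx : x ∈ l) : HasPathIn s t S (t x) (s x) := by
  have hcycle : Cycle.Chain (fun e f => t e = s f) (l : Cycle E) := by
    rw [Cycle.chain_ne_nil _ hl]
    obtain ⟨y, m, rfl⟩ := List.exists_cons_of_ne_nil hl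
    exact List.isChain_cons_cons.2 ⟨hcyc, hc⟩
  obtain ⟨l₁, l₂, rfl⟩ := List.append_of_mem hx
  rw [Cycle.coe_eq_coe.2 List.isRotated_append, List.cons_append, Cycle.chain_coe_cons] at hcycle
  refine hasPathIn_of_isChain_cons_append_singleton (fun e he => hS e ?_) hcycle
  simp only [List.mem_cons, List.mem_append] at he ⊢
  tauto

theorem HasCycleIn.hasCycleIn_or_hasPathIn {x : E} (hs : ∀ e ≠ x, s e = s' e)
    (h : HasCycleIn s' t S) : HasCycleIn s t S ∨ HasPathIn s' t S (t x) (s' x) := by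
  obtain ⟨l, hl, hS, hc, hcyc⟩ := h
  by_cases hx : x ∈ l
  · exact .inr (hasPathIn_of_mem_cycle hl hS hc hcyc hx)
  · have hsl : ∀ e ∈ l, s e = s' e := fun e he => hs e (ne_of_mem_of_not_mem he hx)
    refine .inl ⟨l, hl, hS, hc.imp_of_mem_imp fun e f _ hf hef => ?_, ?_⟩
    · rw [hsl f hf]; exact hef
    · rw [hsl _ (List.head_mem hl)]; exact hcyc

theorem HasCycleIn.of_not_stronglyConnectedIn [Fintype E] {x : E} (hs : ∀ e ≠ x, s e = s' e)
    (h' : ¬ StronglyConnectedIn s' t (s' x) (t x)) (hcyc : HasCycleIn s' t S) :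
    HasCycleIn s t S :=
  (hcyc.hasCycleIn_or_hasPathIn hs).resolve_right fun hpath =>
    h' ⟨hasPathIn_singleton (Finset.mem_univ x), hpath.mono (Finset.subset_univ S)⟩

theorem hasCycleIn_iff_of_not_stronglyConnectedIn [Fintype E] {x : E}
    (hs : ∀ e ≠ x, s e = s' e) (h : ¬ StronglyConnectedIn s t (s x) (t x))
    (h' : ¬ StronglyConnectedIn s' t (s' x) (t x)) : HasCycleIn s t S ↔ HasCycleIn s' t S :=
  ⟨.of_not_stronglyConnectedIn (fun e he => (hs e he).symm) h, .of_not_stronglyConnectedIn hs h'⟩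

end

theorem sum_arborescence_weights_eq_of_moved_arc_general
    (n : ℕ) (R : Type*) [CommRing R]
    (D : Type*) [Fintype D]
    (sD tD : D → Fin (n + 1)) (wD : D → R)
    (a b c : Fin (n + 1)) (ω : R)
    (hΓ : ¬ StronglyConnectedIn (Sum.elim sD fun _ : Unit => a)
            (Sum.elim tD fun _ : Unit => b) a b)
    (hΓ' : ¬ StronglyConnectedIn (Sum.elim sD fun _ : Unit => c)
            (Sum.elim tD fun _ : Unit => b) c b) :
    (∑ S ∈ Finset.univ.filter
        (IsArbor n (Sum.elim sD fun _ : Unit => a) (Sum.elim tD fun _ : Unit => b)),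
      ∏ e ∈ S, Sum.elim wD (fun _ : Unit => ω) e)
    = ∑ S ∈ Finset.univ.filter
        (IsArbor n (Sum.elim sD fun _ : Unit => c) (Sum.elim tD fun _ : Unit => b)),
      ∏ e ∈ S, Sum.elim wD (fun _ : Unit => ω) e := by
  have hs : ∀ e ≠ Sum.inr (),
      Sum.elim sD (fun _ : Unit => a) e = Sum.elim sD (fun _ : Unit => c) e := by
    rintro (d | ⟨⟩) he
    · rfl
    · exact absurd rfl he
  refine Finset.sum_congr (Finset.filter_congr fun S _ => ?_) fun _ _ => rfl
  exact and_congr_right' <| and_congr_right' <| not_congr <|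
    hasCycleIn_iff_of_not_stronglyConnectedIn hs hΓ hΓ'

/-- **moving-arcs theorem.** Let `Γ` have arcs `D` plus an extra arc `a → b`
of weight `ω`, and `Γ'` have arcs `D` plus an extra arc `c → b` of weight `ω`. If `a` and `b`
are not strongly connected in `Γ` and `c` and `b` are not strongly connected in `Γ'`, then the
sums of arborescence weights of `Γ` and `Γ'` agree. -/
theorem sum_arborescence_weights_eq_of_moved_arc
    (n : ℕ) (hn : 1 ≤ n) (R : Type*) [CommRing R]
    (D : Type*) [Fintype D] [DecidableEq D]
    (sD tD : D → Fin (n + 1)) (wD : D → R)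
    (htD : ∀ e, tD e ≠ 0) (hsD : ∀ e, sD e ≠ tD e)
    (a b c : Fin (n + 1)) (hb : b ≠ 0) (hab : a ≠ b) (hcb : c ≠ b) (ω : R)
    (hΓ : ¬ StronglyConnectedIn (Sum.elim sD fun _ : Unit => a)
            (Sum.elim tD fun _ : Unit => b) a b)
    (hΓ' : ¬ StronglyConnectedIn (Sum.elim sD fun _ : Unit => c)
            (Sum.elim tD fun _ : Unit => b) c b) :
    (∑ S ∈ Finset.univ.filter
        (IsArbor n (Sum.elim sD fun _ : Unit => a) (Sum.elim tD fun _ : Unit => b)),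
      ∏ e ∈ S, Sum.elim wD (fun _ : Unit => ω) e)
    = ∑ S ∈ Finset.univ.filter
        (IsArbor n (Sum.elim sD fun _ : Unit => c) (Sum.elim tD fun _ : Unit => b)),
      ∏ e ∈ S, Sum.elim wD (fun _ : Unit => ω) e :=
  sum_arborescence_weights_eq_of_moved_arc_general n R D sD tD wD a b c ω hΓ hΓ'
end

section
/- Let n ≥ 1, let R be a commutative ring, and let Γ be a weighted matrix digraph on vertices {0,1,…,n} given by a finite arc type E with source map s, target map t and weight map w as above. Fix a vertex j ∈ {1,…,n}. Let Γ_j be the digraph obtained from Γ by deleting all arcs e with t(e) = j and s(e) ≠ 0 (keeping all in-arcs to j whose source is the root), and let Γ̄_j be the digraph obtained from Γ by deleting all arcs e with t(e) = j and s(e) = 0. Then the sum of arborescence weights of Γ equals the sum of arborescence weights of Γ_j plus the sum of arborescence weights of Γ̄_j. -/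
attribute [local instance] Classical.propDecidable

/-
In an arborescence the vertex `j ≠ 0` has exactly one in-arc, and that arc either
comes from the root or it does not. The arborescences of the first kind are exactly those of
`Γⱼ`, the others exactly those of `Γ̄ⱼ`, since deleting arcs does not affect being an
arborescence for an arc set that avoids them.
-/

open Finset

lemma hasCycleIn_subtype_iff {V E : Type*} (s t : E → V) (P : E → Prop)
    (S : Finset {e // P e}) :
    HasCycleIn (fun e => s e.1) (fun e => t e.1) S ↔
      HasCycleIn s t (S.map (Function.Embedding.subtype P)) := by
  constructor
  · rintro ⟨l, hl, hmem, hchain, hlast⟩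
    refine ⟨l.map Subtype.val, mt List.map_eq_nil_iff.1 hl, fun e he => ?_,
      (List.isChain_map _).2 hchain, by rwa [List.getLast_map, List.head_map]⟩
    obtain ⟨a, ha, rfl⟩ := List.mem_map.1 he
    exact mem_map_of_mem _ (hmem a ha)
  · rintro ⟨l, hl, hmem, hchain, hlast⟩
    have hP : ∀ e ∈ l, P e := fun e he => by
      obtain ⟨a, -, rfl⟩ := mem_map.1 (hmem e he)
      exact a.2
    lift l to List {e // P e} using hP
    refine ⟨l, by rintro rfl; exact hl rfl,
      fun e he => (mem_map' _).1 (hmem _ (List.mem_map_of_mem he)),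
      (List.isChain_map _).1 hchain, by rwa [List.getLast_map, List.head_map] at hlast⟩

lemma existsUnique_mem_map_iff {E E' : Type*} (f : E' ↪ E) (S : Finset E') (Q : E → Prop) :
    (∃! e, e ∈ S.map f ∧ Q e) ↔ ∃! e, e ∈ S ∧ Q (f e) := by
  constructor
  · rintro ⟨e, ⟨he, hQ⟩, huniq⟩
    obtain ⟨a, ha, rfl⟩ := mem_map.1 he
    exact ⟨a, ⟨ha, hQ⟩, fun b hb => f.injective (huniq _ ⟨mem_map_of_mem f hb.1, hb.2⟩)⟩
  · rintro ⟨a, ⟨ha, hQ⟩, huniq⟩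
    refine ⟨f a, ⟨mem_map_of_mem f ha, hQ⟩, ?_⟩
    rintro e ⟨he, hQe⟩
    obtain ⟨b, hb, rfl⟩ := mem_map.1 he
    rw [huniq b ⟨hb, hQe⟩]

lemma isArbor_subtype_iff {E : Type*} (n : ℕ) (s t : E → Fin (n + 1)) (P : E → Prop)
    (S : Finset {e // P e}) :
    IsArbor n (fun e => s e.1) (fun e => t e.1) S ↔
      IsArbor n s t (S.map (Function.Embedding.subtype P)) := by
  simp only [IsArbor, card_map, hasCycleIn_subtype_iff, existsUnique_mem_map_iff]
  rfl

lemma sum_isArbor_subtype {E R : Type*} [Fintype E] [AddCommMonoid R] (n : ℕ)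
    (s t : E → Fin (n + 1)) (P : E → Prop) [DecidablePred P] (f : Finset E → R) :
    ∑ S ∈ univ.filter (fun S : Finset {e // P e} =>
        IsArbor n (fun e => s e.1) (fun e => t e.1) S),
      f (S.map (Function.Embedding.subtype P))
    = ∑ T ∈ univ.filter (fun T => IsArbor n s t T ∧ ∀ e ∈ T, P e), f T := by
  have himage : (univ.filter (fun S : Finset {e // P e} =>
        IsArbor n (fun e => s e.1) (fun e => t e.1) S)).map
          (mapEmbedding (Function.Embedding.subtype P)).toEmbedding
      = univ.filter (fun T => IsArbor n s t T ∧ ∀ e ∈ T, P e) := by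
    ext T
    simp only [mem_map, mem_filter, mem_univ, true_and, RelEmbedding.coe_toEmbedding,
      mapEmbedding_apply, isArbor_subtype_iff]
    constructor
    · rintro ⟨S, hS, rfl⟩
      exact ⟨hS, fun e he => by obtain ⟨a, -, rfl⟩ := mem_map.1 he; exact a.2⟩
    · rintro ⟨hT, hP⟩
      have hT_eq : (T.subtype P).map (Function.Embedding.subtype P) = T := by
        rw [subtype_map, filter_true_of_mem hP]
      exact ⟨T.subtype P, by rwa [hT_eq], hT_eq⟩
  rw [← himage, sum_map]
  rfl

lemma sum_prod_isArbor_subtype {E R : Type*} [Fintype E] [CommSemiring R]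
    (n : ℕ) (s t : E → Fin (n + 1)) (w : E → R) (P : E → Prop) [DecidablePred P] :
    ∑ S ∈ univ.filter (fun S : Finset {e // P e} =>
        IsArbor n (fun e => s e.1) (fun e => t e.1) S), ∏ e ∈ S, w e.1
    = ∑ T ∈ univ.filter (fun T => IsArbor n s t T ∧ ∀ e ∈ T, P e), ∏ e ∈ T, w e := by
  simpa only [prod_map, Function.Embedding.coe_subtype]
    using sum_isArbor_subtype n s t P (fun T => ∏ e ∈ T, w e)

lemma IsArbor.exists_inArc_from_root_iff {E : Type*} {n : ℕ} {s t : E → Fin (n + 1)}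
    {S : Finset E} (hS : IsArbor n s t S) {j : Fin (n + 1)} (hj : j ≠ 0) :
    (∃ e ∈ S, t e = j ∧ s e = 0) ↔ ∀ e ∈ S, ¬(t e = j ∧ s e ≠ 0) := by
  obtain ⟨g, ⟨hgS, hgj⟩, hg⟩ := hS.2.1 j hj
  constructor
  · rintro ⟨f, hfS, hfj, hf0⟩ e heS ⟨hej, he0⟩
    rw [hg e ⟨heS, hej⟩, ← hg f ⟨hfS, hfj⟩] at he0
    exact he0 hf0
  · intro h
    exact ⟨g, hgS, hgj, not_not.1 fun hg0 => h g hgS ⟨hgj, hg0⟩⟩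

theorem sum_arborescence_weights_split_at_vertex_general
    (n : ℕ) (R : Type*) [CommRing R]
    (E : Type*) [Fintype E]
    (s t : E → Fin (n + 1)) (w : E → R)
    (j : Fin (n + 1)) (hj : j ≠ 0) :
    (∑ S ∈ Finset.univ.filter (IsArbor n s t), ∏ e ∈ S, w e)
    = (∑ S ∈ Finset.univ.filter (fun S : Finset {e : E // ¬(t e = j ∧ s e ≠ 0)} =>
          IsArbor n (fun e => s e.1) (fun e => t e.1) S), ∏ e ∈ S, w e.1)
    + ∑ S ∈ Finset.univ.filter (fun S : Finset {e : E // ¬(t e = j ∧ s e = 0)} =>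
          IsArbor n (fun e => s e.1) (fun e => t e.1) S), ∏ e ∈ S, w e.1 := by
  rw [sum_prod_isArbor_subtype, sum_prod_isArbor_subtype,
    ← sum_filter_add_sum_filter_not _ (fun T => ∃ e ∈ T, t e = j ∧ s e = 0),
    filter_filter, filter_filter]
  congr 2 <;> refine filter_congr fun T _ => and_congr_right fun hT => ?_
  · exact hT.exists_inArc_from_root_iff hj
  · simp only [not_exists, not_and]

/-- Fix a vertex `j ∈ {1,…,n}`. Let `Γⱼ` be obtained from `Γ` by deleting
all in-arcs to `j` whose source is not the root, and `Γ̄ⱼ` by deleting all in-arcs to `j` whose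
source is the root. Then the sum of arborescence weights of `Γ` equals the sum for `Γⱼ` plus
the sum for `Γ̄ⱼ`. -/
theorem sum_arborescence_weights_split_at_vertex
    (n : ℕ) (hn : 1 ≤ n) (R : Type*) [CommRing R]
    (E : Type*) [Fintype E] [DecidableEq E]
    (s t : E → Fin (n + 1)) (w : E → R)
    (ht : ∀ e, t e ≠ 0) (hs : ∀ e, s e ≠ t e)
    (j : Fin (n + 1)) (hj : j ≠ 0) :
    (∑ S ∈ Finset.univ.filter (IsArbor n s t), ∏ e ∈ S, w e)
    = (∑ S ∈ Finset.univ.filter (fun S : Finset {e : E // ¬(t e = j ∧ s e ≠ 0)} =>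
          IsArbor n (fun e => s e.1) (fun e => t e.1) S), ∏ e ∈ S, w e.1)
    + ∑ S ∈ Finset.univ.filter (fun S : Finset {e : E // ¬(t e = j ∧ s e = 0)} =>
          IsArbor n (fun e => s e.1) (fun e => t e.1) S), ∏ e ∈ S, w e.1 :=
  sum_arborescence_weights_split_at_vertex_general n R E s t w j hj
end

section
/- Let n ≥ 1, let R be a commutative ring, and let Γ be a weighted matrix digraph on vertices {0,1,…,n} given by a finite arc type E with source map s, target map t and weight map w as above. Fix a vertex j ∈ {1,…,n} and suppose that every arc of Γ with target j has source 0 (the vertex j is explicitly rooted). Let Γ' be the digraph with the same arc type E, the same target and weight maps, and source map s' defined by s'(e) = 0 if s(e) = j and s'(e) = s(e) otherwise (every out-arc of j is re-sourced to the root). Then the sum of arborescence weights of Γ equals the sum of arborescence weights of Γ'. -/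
/-
Along a directed cycle every source is the target of the preceding arc, so no arc of a cycle
leaves the root. In `Γ` a cycle through `j` would have to enter `j`, hence leave the root; in
`Γ'` an arc re-sourced from `j` leaves the root. So no cycle of either digraph uses an arc out of
`j`, the two source maps agree on all arcs of every cycle, and both digraphs have the same acyclic
arc sets. The other conditions defining an arborescence only involve targets.
-/

attribute [local instance] Classical.propDecidable

section DirectedCycle

variable {V E : Type*} {s s' t : E → V} {l : List E}

def IsDirectedCycle (s t : E → V) (l : List E) : Prop :=
  ∃ hl : l ≠ [], l.IsChain (fun e f => t e = s f) ∧ t (l.getLast hl) = s (l.head hl)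

lemma hasCycleIn_iff_exists_isDirectedCycle {S : Finset E} :
    HasCycleIn s t S ↔ ∃ l, (∀ e ∈ l, e ∈ S) ∧ IsDirectedCycle s t l :=
  ⟨fun ⟨l, hl, hS, hc⟩ => ⟨l, hS, hl, hc⟩, fun ⟨l, hS, hl, hc⟩ => ⟨l, hl, hS, hc⟩⟩

lemma IsDirectedCycle.exists_target_eq_source (hc : IsDirectedCycle s t l) :
    ∀ f ∈ l, ∃ g ∈ l, t g = s f := by
  obtain ⟨hl, hchain, hwrap⟩ := hc
  intro f hf
  obtain ⟨i, hi, rfl⟩ := List.mem_iff_getElem.mp hf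
  rcases i with _ | i
  · exact ⟨l.getLast hl, List.getLast_mem hl, by rw [hwrap, List.head_eq_getElem]⟩
  · exact ⟨l[i], List.getElem_mem _, List.isChain_iff_getElem.mp hchain i hi⟩

lemma IsDirectedCycle.congr_source (hc : IsDirectedCycle s t l) (hss' : ∀ e ∈ l, s e = s' e) :
    IsDirectedCycle s' t l := by
  obtain ⟨hl, hchain, hwrap⟩ := hc
  refine ⟨hl, ?_, hss' _ (List.head_mem hl) ▸ hwrap⟩
  exact hchain.imp_of_mem_imp fun e f _ hf h => hss' f hf ▸ h

lemma IsDirectedCycle.source_ne (hc : IsDirectedCycle s t l) {r : V} (ht : ∀ e, t e ≠ r) :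
    ∀ f ∈ l, s f ≠ r := by
  intro f hf hfr
  obtain ⟨g, -, hg⟩ := hc.exists_target_eq_source f hf
  exact ht g (hg.trans hfr)

lemma hasCycleIn_iff_of_isolation {r j : V} [DecidableEq V] (ht : ∀ e, t e ≠ r)
    (hrooted : ∀ e, t e = j → s e = r) (S : Finset E) :
    HasCycleIn s t S ↔ HasCycleIn (fun e => if s e = j then r else s e) t S := by
  simp only [hasCycleIn_iff_exists_isDirectedCycle]
  refine exists_congr fun l => and_congr_right fun _ => ⟨fun hc => ?_, fun hc => ?_⟩
  · refine hc.congr_source fun f hf => (if_neg fun hfj => ?_).symm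
    obtain ⟨g, hg, hgf⟩ := hc.exists_target_eq_source f hf
    exact hc.source_ne ht g hg (hrooted g (hgf.trans hfj))
  · refine hc.congr_source fun f hf => if_neg fun hfj => ?_
    exact hc.source_ne ht f hf (if_pos hfj)

end DirectedCycle

theorem sum_arborescence_weights_eq_of_isolation_general
    (n : ℕ) (R : Type*) [CommRing R]
    (E : Type*) [Fintype E]
    (s t : E → Fin (n + 1)) (w : E → R)
    (ht : ∀ e, t e ≠ 0)
    (j : Fin (n + 1))
    (hrooted : ∀ e, t e = j → s e = 0) :
    (∑ S ∈ Finset.univ.filter (IsArbor n s t), ∏ e ∈ S, w e)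
    = ∑ S ∈ Finset.univ.filter
        (IsArbor n (fun e => if s e = j then 0 else s e) t), ∏ e ∈ S, w e := by
  refine Finset.sum_congr (Finset.filter_congr fun S _ => ?_) fun _ _ => rfl
  simp only [IsArbor, hasCycleIn_iff_of_isolation ht hrooted S]

/-- **isolation.** Suppose the vertex `j ∈ {1,…,n}` is explicitly rooted in
`Γ`: every arc with target `j` has the root `0` as its source. Let `Γ'` be the digraph with
the same arcs, targets and weights, but where every arc with source `j` is re-sourced to the
root `0`. Then the sums of arborescence weights of `Γ` and `Γ'` agree. -/
theorem sum_arborescence_weights_eq_of_isolation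
    (n : ℕ) (hn : 1 ≤ n) (R : Type*) [CommRing R]
    (E : Type*) [Fintype E] [DecidableEq E]
    (s t : E → Fin (n + 1)) (w : E → R)
    (ht : ∀ e, t e ≠ 0) (hs : ∀ e, s e ≠ t e)
    (j : Fin (n + 1)) (hj : j ≠ 0)
    (hrooted : ∀ e, t e = j → s e = 0) :
    (∑ S ∈ Finset.univ.filter (IsArbor n s t), ∏ e ∈ S, w e)
    = ∑ S ∈ Finset.univ.filter
        (IsArbor n (fun e => if s e = j then 0 else s e) t), ∏ e ∈ S, w e :=
  sum_arborescence_weights_eq_of_isolation_general n R E s t w ht j hrooted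
end
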